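/- Let J ⊆ (ℝ,≤)² be a connected and convex subposet and M:J→vect_F a functor such that M(i≤j) is an isomorphism for all i≤j in J. Then for every a ∈ J, the cone on M with apex Ma whose leg at i ∈ J is the (path-independent) zigzag composite M(a⇝i) is a limit cone; in particular lim_J M ≅ Ma for all a ∈ J. -/

import Mathlib

/-- A persistence module over a preorder `P` with coefficients in a field `F`:
a functor `(P,≤) → Vect_F`, given by vector spaces `V p` and linear maps
`map : i ≤ j → (V i →ₗ[F] V j)` satisfying the functoriality equations. -/
structure PersistenceModule (F : Type) [Field F] (P : Type) [Preorder P] where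
  V : P → Type
  [addCommGroup : ∀ p, AddCommGroup (V p)]
  [module : ∀ p, Module F (V p)]
  map : ∀ {i j : P}, i ≤ j → (V i →ₗ[F] V j)
  map_id : ∀ i : P, map (le_refl i) = LinearMap.id
  map_comp : ∀ {i j k : P} (hij : i ≤ j) (hjk : j ≤ k),
    (map hjk).comp (map hij) = map (hij.trans hjk)

attribute [instance] PersistenceModule.addCommGroup PersistenceModule.module

/-- A zigzag path `a - x₁ - ⋯ - xₙ - b` in a preorder, where each consecutive
pair of points is comparable. -/
inductive Zigzag (P : Type) [Preorder P] : P → P → Type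
  | single (a : P) : Zigzag P a a
  | consLe {a b c : P} (h : a ≤ b) (p : Zigzag P b c) : Zigzag P a c
  | consGe {a b c : P} (h : b ≤ a) (p : Zigzag P b c) : Zigzag P a c

/-- Convexity of a subset of a poset: `i ≤ j ≤ k` with `i, k ∈ J` implies `j ∈ J`. -/
def PosetConvex {P : Type} [Preorder P] (J : Set P) : Prop :=
  ∀ i ∈ J, ∀ k ∈ J, ∀ j : P, i ≤ j → j ≤ k → j ∈ J

/-- Connectedness: any two points of `J` are joined by a finite zigzag path inside `J`. -/
def ZigzagConnected {P : Type} [Preorder P] (J : Set P) : Prop :=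
  ∀ a b : J, Nonempty (Zigzag (↥J) a b)

/-- The composite `M(a ⇝ b)` along a zigzag path, using `M̂(i,j) = M(i≤j)` on
good arrows and `M̂(i,j) = M(j≤i)⁻¹` on bad arrows. -/
noncomputable def zigzagMap {F : Type} [Field F] {P : Type} [Preorder P]
    (M : PersistenceModule F P)
    (hiso : ∀ (i j : P) (h : i ≤ j), Function.Bijective (M.map h)) :
    {a b : P} → Zigzag P a b → (M.V a →ₗ[F] M.V b)
  | _, _, .single _ => LinearMap.id
  | _, _, .consLe h p => (zigzagMap M hiso p).comp (M.map h)
  | _, _, .consGe h p =>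
      (zigzagMap M hiso p).comp
        ((LinearEquiv.ofBijective (M.map h) (hiso _ _ h)).symm.toLinearMap)

/-- `L` together with the legs `σ` is a limit cone over the persistence module `M`. -/
def IsLimitCone {F : Type} [Field F] {P : Type} [Preorder P] (M : PersistenceModule F P)
    (L : Type) [AddCommGroup L] [Module F L] (σ : ∀ i : P, L →ₗ[F] M.V i) : Prop :=
  (∀ (i j : P) (h : i ≤ j), (M.map h).comp (σ i) = σ j) ∧
  ∀ (N : Type) [AddCommGroup N] [Module F N] (τ : ∀ i : P, N →ₗ[F] M.V i),
    (∀ (i j : P) (h : i ≤ j), (M.map h).comp (τ i) = τ j) →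
    ∃! φ : N →ₗ[F] L, ∀ i : P, (σ i).comp φ = τ i

/-!
Since every structure map is invertible, path independence amounts to every zigzag loop
composing to the identity. The maps `M̂` along three pairwise comparable points commute, so a
vertex whose neighbours are comparable can be skipped, and a peak can be lowered to the join (a
valley raised to the meet) of its two neighbours, which lies in `J` by convexity. Pushing a new
first step through an already normalised zigzag in this way shows that every zigzag has the
composite of a taut one, in which each interior vertex is the join or the meet of its two
incomparable neighbours. In `ℝ²` the antidiagonal coordinate `z₁ - z₂` is strictly monotone along
a taut zigzag, so a taut loop has at most one step and composes to the identity.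
-/

namespace Zigzag

variable {P : Type} [Preorder P]

def vertices : {a b : P} → Zigzag P a b → List P
  | a, _, single _ => [a]
  | a, _, consLe _ p => a :: p.vertices
  | a, _, consGe _ p => a :: p.vertices

def append : {a b c : P} → Zigzag P a b → Zigzag P b c → Zigzag P a c
  | _, _, _, single _, q => q
  | _, _, _, consLe h p, q => consLe h (p.append q)
  | _, _, _, consGe h p, q => consGe h (p.append q)

def reverse : {a b : P} → Zigzag P a b → Zigzag P b a
  | _, _, single a => single a
  | _, _, consLe h p => p.reverse.append (consGe h (single _))
  | _, _, consGe h p => p.reverse.append (consLe h (single _))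

open Classical in
noncomputable def cons {a b c : P} (h : a ≤ b ∨ b ≤ a) (p : Zigzag P b c) : Zigzag P a c :=
  if hab : a ≤ b then consLe hab p else consGe (h.resolve_left hab) p

theorem vertices_cons {a b c : P} (h : a ≤ b ∨ b ≤ a) (p : Zigzag P b c) :
    (cons h p).vertices = a :: p.vertices := by
  unfold cons; split <;> rfl

theorem exists_vertices_eq_cons {a b : P} (p : Zigzag P a b) : ∃ t, p.vertices = a :: t := by
  cases p <;> exact ⟨_, rfl⟩

theorem target_mem_vertices {a b : P} (p : Zigzag P a b) : b ∈ p.vertices := by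
  induction p <;> simp_all [vertices]

end Zigzag

namespace PersistenceModule

variable {F : Type} [Field F] {P : Type} [Preorder P] (M : PersistenceModule F P)
  (hiso : ∀ (i j : P) (h : i ≤ j), Function.Bijective (M.map h))

open Classical in
/-- The map `M̂(i, j)` between comparable indices. -/
noncomputable def hat {i j : P} (h : i ≤ j ∨ j ≤ i) : M.V i →ₗ[F] M.V j :=
  if hij : i ≤ j then M.map hij
  else (LinearEquiv.ofBijective (M.map _) (hiso j i (h.resolve_left hij))).symm.toLinearMap

variable {M} {i j k : P}

theorem hat_of_le (h : i ≤ j ∨ j ≤ i) (hij : i ≤ j) : M.hat hiso h = M.map hij :=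
  dif_pos hij

theorem hat_comp_map (h : i ≤ j ∨ j ≤ i) (hki : k ≤ i) (hkj : k ≤ j) :
    (M.hat hiso h).comp (M.map hki) = M.map hkj := by
  unfold hat
  split_ifs with hij
  · exact M.map_comp hki hij
  · ext v
    rw [← M.map_comp hkj (h.resolve_left hij)]
    exact LinearEquiv.ofBijective_symm_apply_apply (h := hiso j i _) _ _

theorem map_refl (hii : i ≤ i) : M.map hii = LinearMap.id := M.map_id i

theorem hat_self (h : i ≤ i ∨ i ≤ i) : M.hat hiso h = LinearMap.id := by
  simpa [map_refl] using hat_comp_map hiso h le_rfl le_rfl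

theorem hat_of_ge (h : i ≤ j ∨ j ≤ i) (hji : j ≤ i) :
    M.hat hiso h = (LinearEquiv.ofBijective (M.map hji) (hiso j i hji)).symm.toLinearMap := by
  rw [← LinearMap.cancel_right (hiso j i hji).2, hat_comp_map hiso h hji le_rfl, map_refl]
  exact (LinearEquiv.symm_comp _).symm

theorem hat_comp_hat (hij : i ≤ j ∨ j ≤ i) (hjk : j ≤ k ∨ k ≤ j) (hik : i ≤ k ∨ k ≤ i) :
    (M.hat hiso hjk).comp (M.hat hiso hij) = M.hat hiso hik := by
  obtain ⟨m, hmi, hmj, hmk⟩ : ∃ m, m ≤ i ∧ m ≤ j ∧ m ≤ k := by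
    rcases hij with hij | hji
    · rcases hik with hik | hki
      · exact ⟨i, le_rfl, hij, hik⟩
      · exact ⟨k, hki, hki.trans hij, le_rfl⟩
    · rcases hjk with hjk | hkj
      · exact ⟨j, hji, le_rfl, hjk⟩
      · exact ⟨k, hkj.trans hji, hkj, le_rfl⟩
  rw [← LinearMap.cancel_right (hiso m i hmi).2, LinearMap.comp_assoc,
    hat_comp_map hiso hij hmi hmj, hat_comp_map hiso hjk hmj hmk, hat_comp_map hiso hik hmi hmk]

theorem hat_comp_of_cone {N : Type} [AddCommGroup N] [Module F N]
    {τ : ∀ i : P, N →ₗ[F] M.V i} (hτ : ∀ (i j : P) (h : i ≤ j), (M.map h).comp (τ i) = τ j)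
    (h : i ≤ j ∨ j ≤ i) :
    (M.hat hiso h).comp (τ i) = τ j := by
  rcases h with hij | hji
  · rw [hat_of_le hiso _ hij, hτ]
  · rw [← hτ j i hji, ← LinearMap.comp_assoc, hat_comp_map hiso _ hji le_rfl, map_refl,
      LinearMap.id_comp]

end PersistenceModule

section ZigzagMap

open PersistenceModule

variable {F : Type} [Field F] {P : Type} [Preorder P] (M : PersistenceModule F P)
  (hiso : ∀ (i j : P) (h : i ≤ j), Function.Bijective (M.map h)) {a b c : P}

theorem zigzagMap_single : zigzagMap M hiso (.single a) = LinearMap.id := rfl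

theorem zigzagMap_consLe (h : a ≤ b) (p : Zigzag P b c) :
    zigzagMap M hiso (.consLe h p) = (zigzagMap M hiso p).comp (M.hat hiso (.inl h)) := by
  rw [hat_of_le hiso _ h]; rfl

theorem zigzagMap_consGe (h : b ≤ a) (p : Zigzag P b c) :
    zigzagMap M hiso (.consGe h p) = (zigzagMap M hiso p).comp (M.hat hiso (.inr h)) := by
  rw [hat_of_ge hiso _ h]; rfl

theorem zigzagMap_cons (h : a ≤ b ∨ b ≤ a) (p : Zigzag P b c) :
    zigzagMap M hiso (.cons h p) = (zigzagMap M hiso p).comp (M.hat hiso h) := by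
  unfold Zigzag.cons
  split
  · exact zigzagMap_consLe M hiso _ p
  · exact zigzagMap_consGe M hiso _ p

theorem zigzagMap_append (p : Zigzag P a b) (q : Zigzag P b c) :
    zigzagMap M hiso (p.append q) = (zigzagMap M hiso q).comp (zigzagMap M hiso p) := by
  induction p with
  | single => rfl
  | consLe h p ih | consGe h p ih =>
    simp only [Zigzag.append, zigzagMap_consLe, zigzagMap_consGe, ih, LinearMap.comp_assoc]

theorem zigzagMap_reverse_comp (p : Zigzag P a b) :
    (zigzagMap M hiso p.reverse).comp (zigzagMap M hiso p) = LinearMap.id := by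
  induction p with
  | single => rfl
  | consLe h p ih | consGe h p ih =>
    simp only [Zigzag.reverse, zigzagMap_append, zigzagMap_consLe, zigzagMap_consGe,
      zigzagMap_single, LinearMap.id_comp, LinearMap.comp_assoc]
    rw [← LinearMap.comp_assoc (M.hat hiso _) (zigzagMap M hiso p), ih, LinearMap.id_comp,
      hat_comp_hat hiso _ _ (.inl le_rfl), hat_self]

theorem zigzagMap_comp_of_cone {N : Type} [AddCommGroup N] [Module F N]
    {τ : ∀ i : P, N →ₗ[F] M.V i} (hτ : ∀ (i j : P) (h : i ≤ j), (M.map h).comp (τ i) = τ j)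
    (p : Zigzag P a b) : (zigzagMap M hiso p).comp (τ a) = τ b := by
  induction p with
  | single => rfl
  | consLe h p ih | consGe h p ih =>
    simp only [zigzagMap_consLe, zigzagMap_consGe]
    rw [LinearMap.comp_assoc, hat_comp_of_cone hiso hτ, ih]

end ZigzagMap

section Lattice

variable {L : Type*} [Lattice L] {a b b' c : L}

def IsTurn (a b c : L) : Prop := ¬a ≤ c ∧ ¬c ≤ a ∧ (b = a ⊔ c ∨ b = a ⊓ c)

def IsTaut : List L → Prop
  | a :: b :: c :: l => IsTurn a b c ∧ IsTaut (b :: c :: l)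
  | _ => True

theorem IsTaut.of_cons {l : List L} (h : IsTaut (a :: l)) : IsTaut l := by
  match l, h with
  | [], _ => trivial
  | [_], _ => trivial
  | _ :: _ :: _, h => exact h.2

theorem IsTurn.of_lt_of_le {d : L} (hcb' : c < b') (hb'b : b' ≤ b) (h : IsTurn b c d) :
    IsTurn b' c d := by
  obtain ⟨hbd, hdb, rfl | rfl⟩ := h
  · exact absurd (le_sup_left.trans_lt (hcb'.trans_le hb'b)) (lt_irrefl _)
  · refine ⟨fun h => hcb'.not_ge (le_inf hb'b h), fun h => hdb (h.trans hb'b), Or.inr ?_⟩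
    exact le_antisymm (le_inf hcb'.le inf_le_right) (inf_le_inf_right _ hb'b)

theorem IsTurn.of_le_of_lt {d : L} (hbb' : b ≤ b') (hb'c : b' < c) (h : IsTurn b c d) :
    IsTurn b' c d := by
  obtain ⟨hbd, hdb, rfl | rfl⟩ := h
  · refine ⟨fun h => hbd (hbb'.trans h), fun h => hb'c.not_ge (sup_le hbb' h), Or.inl ?_⟩
    exact le_antisymm (sup_le_sup_right hbb' _) (sup_le hb'c.le le_sup_right)
  · exact absurd ((hbb'.trans_lt hb'c).trans_le inf_le_left) (lt_irrefl _)

theorem IsTaut.of_isTurn_imp {l : List L} (himp : ∀ d, IsTurn b c d → IsTurn b' c d)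
    (h : IsTaut (b :: c :: l)) : IsTaut (b' :: c :: l) := by
  match l, h with
  | [], _ => trivial
  | _ :: _, h => exact ⟨himp _ h.1, h.2⟩

theorem IsTaut.pairwise {β : Type*} [Preorder β] {f : L → β}
    (hf : ∀ a b c, IsTurn a b c → f a < f b → f b < f c) {l : List L}
    (h : IsTaut (a :: b :: l)) (hab : f a < f b) : (a :: b :: l).Pairwise (f · < f ·) := by
  induction l generalizing a b with
  | nil => exact List.pairwise_pair.mpr hab
  | cons c l ih =>
    have hbc := hf a b c h.1 hab
    have hrest := ih h.2 hbc
    refine List.pairwise_cons.mpr ⟨fun z hz => ?_, hrest⟩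
    rcases List.mem_cons.mp hz with rfl | hz
    · exact hab
    · exact hab.trans (List.rel_of_pairwise_cons hrest hz)

end Lattice

def antidiag (z : ℝ × ℝ) : ℝ := z.1 - z.2

theorem IsTurn.antidiag_strictly_between {a b c : ℝ × ℝ} (h : IsTurn a b c) :
    (antidiag a < antidiag b ∧ antidiag b < antidiag c) ∨
      (antidiag c < antidiag b ∧ antidiag b < antidiag a) := by
  obtain ⟨hac, hca, rfl | rfl⟩ := h <;>
  · simp only [Prod.le_def, not_and_or, not_le] at hac hca
    simp only [antidiag, Prod.fst_sup, Prod.snd_sup, Prod.fst_inf, Prod.snd_inf]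
    rcases hac with h1 | h1 <;> rcases hca with h2 | h2
    all_goals first
      | exact absurd h1 h2.not_gt
      | simp only [max_eq_left, max_eq_right, min_eq_left, min_eq_right, h1.le, h2.le]
        first | (left; constructor <;> linarith) | (right; constructor <;> linarith)

theorem IsTaut.nodup {a b c : ℝ × ℝ} {l : List (ℝ × ℝ)} (h : IsTaut (a :: b :: c :: l)) :
    (a :: b :: c :: l).Nodup := by
  rcases h.1.antidiag_strictly_between with ⟨hab, -⟩ | ⟨-, hba⟩
  · refine (h.pairwise (f := antidiag) (fun _ _ _ ht hlt => ?_) hab).imp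
      fun hlt he => hlt.ne (congrArg _ he)
    rcases ht.antidiag_strictly_between with h | h <;> linarith [h.1, h.2]
  · refine (h.pairwise (f := fun z => -antidiag z) (fun _ _ _ ht hlt => ?_)
      (by linarith)).imp fun hlt he => hlt.ne (congrArg (fun z => -antidiag z) he)
    rcases ht.antidiag_strictly_between with h | h <;> linarith [h.1, h.2]

theorem PosetConvex.exists_isTurn {L : Type} [Lattice L] {J : Set L} (hJ : PosetConvex J)
    {x b c : J} (hxb : x ≤ b ∨ b ≤ x) (hbc : b ≤ c ∨ c ≤ b) (hxc : ¬(x ≤ c ∨ c ≤ x)) :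
    ∃ b' : J, (x ≤ b' ∨ b' ≤ x) ∧ (b' ≤ c ∨ c ≤ b') ∧ (b' ≤ b ∨ b ≤ b') ∧
      IsTurn (x : L) b' c ∧ ∀ d, IsTurn (b : L) c d → IsTurn (b' : L) c d := by
  obtain ⟨hxc, hcx⟩ := not_or.mp hxc
  rcases hxb with hxb | hbx <;> rcases hbc with hbc | hcb
  · exact absurd (hxb.trans hbc) hxc
  · have hb'b : (x : L) ⊔ c ≤ b := sup_le hxb hcb
    exact ⟨⟨(x : L) ⊔ c, hJ x x.2 b b.2 _ le_sup_left hb'b⟩, .inl le_sup_left,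
      .inr le_sup_right, .inl hb'b, ⟨hxc, hcx, .inl rfl⟩,
      fun _ => IsTurn.of_lt_of_le (right_lt_sup.mpr hxc) hb'b⟩
  · have hbb' : (b : L) ≤ (x : L) ⊓ c := le_inf hbx hbc
    exact ⟨⟨(x : L) ⊓ c, hJ b b.2 x x.2 _ hbb' inf_le_left⟩, .inr inf_le_left,
      .inl inf_le_right, .inr hbb', ⟨hxc, hcx, .inr rfl⟩,
      fun _ => IsTurn.of_le_of_lt hbb' (inf_lt_right.mpr hcx)⟩
  · exact absurd (hcb.trans hbx) hcx

section Convex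

open PersistenceModule

variable {F : Type} [Field F] {L : Type} [Lattice L] {J : Set L} (M : PersistenceModule F J)
  (hiso : ∀ (i j : J) (h : i ≤ j), Function.Bijective (M.map h))

theorem exists_isTaut_zigzagMap_eq_comp_hat (hJ : PosetConvex J) {x b y : J}
    (hxb : x ≤ b ∨ b ≤ x) (q : Zigzag J b y) (hq : IsTaut (q.vertices.map Subtype.val)) :
    ∃ q' : Zigzag J x y, IsTaut (q'.vertices.map Subtype.val) ∧
      zigzagMap M hiso q' = (zigzagMap M hiso q).comp (M.hat hiso hxb) := by
  induction q generalizing x with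
  | single =>
    refine ⟨.cons hxb (.single _), ?_, zigzagMap_cons M hiso _ _⟩
    rw [Zigzag.vertices_cons]
    trivial
  | @consLe b c y hbc r ih | @consGe b c y hbc r ih =>
    simp only [zigzagMap_consLe, zigzagMap_consGe]
    by_cases hxc : x ≤ c ∨ c ≤ x
    · obtain ⟨q', hq', hmap⟩ := ih hxc hq.of_cons
      refine ⟨q', hq', ?_⟩
      rw [hmap, LinearMap.comp_assoc, hat_comp_hat hiso hxb _ hxc]
    · obtain ⟨b', hxb', hb'c, hb'b, hturn, himp⟩ := hJ.exists_isTurn hxb (by tauto) hxc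
      obtain ⟨t, ht⟩ := r.exists_vertices_eq_cons
      refine ⟨.cons hxb' (.cons hb'c r), ?_, ?_⟩
      · simp only [Zigzag.vertices, Zigzag.vertices_cons, ht, List.map_cons] at hq ⊢
        exact ⟨hturn, hq.of_isTurn_imp himp⟩
      · rw [zigzagMap_cons, zigzagMap_cons, ← hat_comp_hat hiso hxb' hb'b hxb,
          ← LinearMap.comp_assoc (M.hat hiso hxb') (M.hat hiso hb'b),
          LinearMap.comp_assoc (M.hat hiso hb'b), hat_comp_hat hiso hb'b _ hb'c]

theorem exists_isTaut_zigzagMap_eq (hJ : PosetConvex J) {x y : J} (p : Zigzag J x y) :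
    ∃ q : Zigzag J x y, IsTaut (q.vertices.map Subtype.val) ∧
      zigzagMap M hiso q = zigzagMap M hiso p := by
  induction p with
  | single => exact ⟨.single _, trivial, rfl⟩
  | consLe h p ih | consGe h p ih =>
    obtain ⟨q, hq, hqp⟩ := ih
    simp only [zigzagMap_consLe, zigzagMap_consGe, ← hqp]
    exact exists_isTaut_zigzagMap_eq_comp_hat M hiso hJ _ q hq

end Convex

section Plane

open PersistenceModule

variable {F : Type} [Field F] {J : Set (ℝ × ℝ)} (M : PersistenceModule F J)
  (hiso : ∀ (i j : J) (h : i ≤ j), Function.Bijective (M.map h))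

theorem zigzagMap_eq_id_of_isTaut {x : J} (q : Zigzag J x x)
    (hq : IsTaut (q.vertices.map Subtype.val)) :
    zigzagMap M hiso q = LinearMap.id := by
  cases q with
  | single => rfl
  | consLe h r | consGe h r =>
    cases r with
    | single =>
      simp only [zigzagMap_consLe, zigzagMap_consGe, zigzagMap_single, hat_self,
        LinearMap.id_comp]
    | consLe h' r | consGe h' r =>
      obtain ⟨t, ht⟩ := r.exists_vertices_eq_cons
      have hx := r.target_mem_vertices
      simp only [Zigzag.vertices, ht, List.map_cons] at hq hx
      exact absurd hq.nodup fun hnd => (List.nodup_cons.mp hnd).1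
        (List.mem_cons_of_mem _ (List.mem_map_of_mem hx))

theorem zigzagMap_eq (hJ : PosetConvex J) {x y : J} (p q : Zigzag J x y) :
    zigzagMap M hiso p = zigzagMap M hiso q := by
  have left_inv_unique : ∀ f, (zigzagMap M hiso q.reverse).comp f = LinearMap.id →
      f = zigzagMap M hiso q.reverse.reverse := fun f hf => by
    rw [← LinearMap.id_comp f, ← zigzagMap_reverse_comp M hiso q.reverse, LinearMap.comp_assoc,
      hf, LinearMap.comp_id]
  obtain ⟨l, hl, hlp⟩ := exists_isTaut_zigzagMap_eq M hiso hJ (p.append q.reverse)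
  rw [zigzagMap_append, zigzagMap_eq_id_of_isTaut M hiso l hl] at hlp
  exact (left_inv_unique _ hlp.symm).trans
    (left_inv_unique _ (zigzagMap_reverse_comp M hiso q)).symm

end Plane

theorem statement3_general (F : Type) [Field F] (J : Set (ℝ × ℝ))
    (hconv : PosetConvex J)
    (M : PersistenceModule F ↥J)
    (hiso : ∀ (i j : ↥J) (h : i ≤ j), Function.Bijective (M.map h))
    (a : ↥J) (pth : ∀ i : ↥J, Zigzag (↥J) a i) :
    IsLimitCone M (M.V a) (fun i => zigzagMap M hiso (pth i)) := by
  refine ⟨fun i j h => ?_, fun N _ _ τ hτ => ⟨τ a, fun i => zigzagMap_comp_of_cone M hiso hτ _,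
    fun φ hφ => ?_⟩⟩
  · dsimp only
    rw [← zigzagMap_eq M hiso hconv ((pth i).append (.consLe h (.single j))), zigzagMap_append]
    rfl
  · rw [← hφ a]
    dsimp only
    rw [← zigzagMap_eq M hiso hconv (.single a)]
    rfl

/-- For `M` on a connected convex `J ⊆ (ℝ,≤)²` with all structure maps
isomorphisms and any `a ∈ J`, the cone with apex `M a` whose leg at `i` is the zigzag
composite `M(a ⇝ i)` is a limit cone; in particular `lim_J M ≅ M a`. -/
theorem statement3 (F : Type) [Field F] (J : Set (ℝ × ℝ))
    (hconv : PosetConvex J) (hconn : ZigzagConnected J)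
    (M : PersistenceModule F ↥J)
    (hiso : ∀ (i j : ↥J) (h : i ≤ j), Function.Bijective (M.map h))
    (a : ↥J) (pth : ∀ i : ↥J, Zigzag (↥J) a i) :
    IsLimitCone M (M.V a) (fun i => zigzagMap M hiso (pth i)) :=
  statement3_general F J hconv M hiso a pth
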